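/- arXiv:2308.00469 — 2 statements merged into one kernel-verified Lean document; each statement's English description precedes it below -/
import Mathlib

section
/- Suppose f : ℝ^d → ℝ is twice continuously differentiable, L-smooth, σ-strongly convex, and has γ-Lipschitz Hessian, with minimizer μ*. Let (μ̂*, Σ̂*) be a minimizer of Q_α over ℝ^d × S. Then f(μ̂*) − f(μ*) ≤ dLα²/τ + γα³(d+3)^{3/2}/(3τ^{3/2}) + (dα²/2)·(τ^{-1} − ζ^{-1}), and ‖μ* − μ̂*‖² ≤ 2dLα²/(στ) + 2γα³(d+3)^{3/2}/(3στ^{3/2}) + (dα²/σ)·(τ^{-1} − ζ^{-1}). -/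
open MeasureTheory ProbabilityTheory Matrix
open scoped BigOperators RealInnerProductSpace

noncomputable section

abbrev Vec (d : ℕ) := EuclideanSpace ℝ (Fin d)
abbrev Mat (d : ℕ) := Matrix (Fin d) (Fin d) ℝ

/-- View a Euclidean vector as a plain function. -/
def toPi {d : ℕ} (u : Vec d) : Fin d → ℝ := u
/-- View a plain function as a Euclidean vector. -/
def ofPi {d : ℕ} (u : Fin d → ℝ) : Vec d := WithLp.toLp 2 u

/-- Matrix-vector multiplication on Euclidean space. -/
def mvec {d : ℕ} (A : Mat d) (u : Vec d) : Vec d := ofPi (A.mulVec (toPi u))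

/-- The standard Gaussian measure N(0, I_d) on ℝ^d. -/
def gaussD (d : ℕ) : Measure (Vec d) :=
  (Measure.pi fun _ : Fin d => gaussianReal 0 1).map (MeasurableEquiv.toLp 2 (Fin d → ℝ))

/-- Frobenius norm of a matrix. -/
def matFrobNorm {m n : ℕ} (A : Matrix (Fin m) (Fin n) ℝ) : ℝ :=
  Real.sqrt (∑ i, ∑ j, (A i j) ^ 2)

/-- Operator (spectral) norm of a matrix. -/
def matOpNorm {m n : ℕ} (A : Matrix (Fin m) (Fin n) ℝ) : ℝ :=
  ‖LinearMap.toContinuousLinearMap (Matrix.toEuclideanLin A)‖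

/-- Loewner order `A ⪯ B`. -/
def loeLE {d : ℕ} (A B : Mat d) : Prop := (B - A).PosSemidef

/-- Hessian matrix of `f` at `x`. -/
def hess {d : ℕ} (f : Vec d → ℝ) (x : Vec d) : Mat d :=
  Matrix.of fun i j =>
    iteratedFDeriv ℝ 2 f x ![EuclideanSpace.single i 1, EuclideanSpace.single j 1]

/-- Membership in `S = {Σ symmetric : ζ⁻¹ I ⪯ Σ ⪯ τ⁻¹ I}`. -/
def Smem {d : ℕ} (τ ζ : ℝ) (A : Mat d) : Prop :=
  A.IsSymm ∧ loeLE (ζ⁻¹ • 1) A ∧ loeLE A (τ⁻¹ • 1)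

/-- Membership in `S' = {A symmetric : τ I ⪯ A ⪯ ζ I}`. -/
def S'mem {d : ℕ} (τ ζ : ℝ) (A : Mat d) : Prop :=
  A.IsSymm ∧ loeLE (τ • 1) A ∧ loeLE A (ζ • 1)

/-- The square root of a positive semidefinite matrix (Mathlib's former `Matrix.PosSemidef.sqrt`). -/
noncomputable def Matrix.PosSemidef.sqrt {n : Type*} [Fintype n] [DecidableEq n]
    {A : Matrix n n ℝ} (hA : A.PosSemidef) : Matrix n n ℝ :=
  hA.1.eigenvectorUnitary.1 * diagonal ((√·) ∘ hA.1.eigenvalues) *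
    (star hA.1.eigenvectorUnitary : Matrix n n ℝ)

/-- The regularized reparameterized objective `Q_α(μ, Σ)`. -/
def Qa {d : ℕ} (f : Vec d → ℝ) (α : ℝ) (μ : Vec d) (S : Mat d) (hS : S.PosSemidef) : ℝ :=
  (∫ u, f (μ + α • mvec hS.sqrt u) ∂ gaussD d) - α ^ 2 / 2 * Real.log S.det


/-!
Convexity of `f` and the vanishing mean of the standard Gaussian give Jensen's bound
`f μ̂ ≤ J(μ̂, Σ̂)`, while the smoothness bound `|f (μ + v) - f μ - ⟪∇f μ, v⟫| ≤ L ‖v‖²` gives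
`J(μ, τ⁻¹ I) ≤ f μ + d L α² / τ` for every `μ`. On `S` we have `log det Σ̂ ≤ log det (τ⁻¹ I)`, so
comparing `Q_α(μ̂, Σ̂)` with `Q_α(μ*, τ⁻¹ I)` yields `f μ̂ - f μ* ≤ d L α² / τ`, already below the
claimed bound. Strong convexity at the minimiser `μ*`, where `∇f μ* = 0`, turns this into the
bound on `‖μ* - μ̂‖²`.
-/

section StdGaussian

variable {E : Type*} [NormedAddCommGroup E] [InnerProductSpace ℝ E] [FiniteDimensional ℝ E]
  [MeasurableSpace E] [BorelSpace E]

lemma integral_inner_sq_stdGaussian (v : E) : ∫ x, ⟪v, x⟫ ^ 2 ∂stdGaussian E = ‖v‖ ^ 2 := by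
  have h := variance_dual_stdGaussian (innerSL ℝ v)
  rwa [variance_of_integral_eq_zero (by fun_prop) (integral_strongDual_stdGaussian _),
    innerSL_apply_norm] at h

lemma integral_norm_sq_stdGaussian : ∫ x, ‖x‖ ^ 2 ∂stdGaussian E = Module.finrank ℝ E := by
  let b := stdOrthonormalBasis ℝ E
  simp_rw [← b.sum_sq_inner_right]
  have hint (i) : Integrable (fun x : E ↦ ⟪b i, x⟫ ^ 2) (stdGaussian E) :=
    ((innerSL ℝ (b i)).comp_memLp' IsGaussian.memLp_two_id).integrable_sq
  rw [integral_finsetSum _ fun i _ ↦ hint i]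
  simp [integral_inner_sq_stdGaussian, b.orthonormal.1]

end StdGaussian

lemma gaussD_eq_stdGaussian (d : ℕ) : gaussD d = stdGaussian (Vec d) :=
  map_pi_eq_stdGaussian

section LipschitzGradient

variable {F : Type*} [NormedAddCommGroup F] [InnerProductSpace ℝ F] [CompleteSpace F]
  {f : F → ℝ} {L : ℝ}

lemma gradient_eq_zero_of_forall_le {x : F} (h : ∀ z, f x ≤ f z) : gradient f x = 0 := by
  simp [gradient, IsLocalMin.fderiv_eq_zero (Filter.Eventually.of_forall h)]

lemma abs_sub_sub_inner_gradient_le (hf : Differentiable ℝ f) (hL0 : 0 ≤ L)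
    (hL : ∀ x y, ‖gradient f x - gradient f y‖ ≤ L * ‖x - y‖) (x y : F) :
    |f x - f y - ⟪gradient f y, x - y⟫| ≤ L * ‖x - y‖ ^ 2 := by
  have bound : ∀ z ∈ segment ℝ y x, ‖fderiv ℝ f z - fderiv ℝ f y‖ ≤ L * ‖x - y‖ := by
    rintro _ ⟨a, t, ha, ht, hat, rfl⟩
    obtain rfl : a = 1 - t := by linarith
    rw [← toDual_gradient, ← toDual_gradient, ← map_sub, LinearIsometryEquiv.norm_map]
    calc ‖gradient f ((1 - t) • y + t • x) - gradient f y‖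
        ≤ L * ‖(1 - t) • y + t • x - y‖ := hL _ _
      _ = L * (t * ‖x - y‖) := by
        rw [show (1 - t) • y + t • x - y = t • (x - y) by
          rw [sub_smul, one_smul, smul_sub]; abel, norm_smul, Real.norm_of_nonneg ht]
      _ ≤ L * ‖x - y‖ := by gcongr; exact mul_le_of_le_one_left (norm_nonneg _) (by linarith)
  have h := (convex_segment y x).norm_image_sub_le_of_norm_fderiv_le'
    (fun z _ ↦ hf.differentiableAt) bound (left_mem_segment ℝ y x) (right_mem_segment ℝ y x)
  rw [← toDual_gradient, InnerProductSpace.toDual_apply_apply, Real.norm_eq_abs] at h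
  nlinarith [norm_nonneg (x - y)]

variable {E : Type*} [NormedAddCommGroup E] [NormedSpace ℝ E]

lemma abs_sub_sub_inner_gradient_comp_add_le (hf : Differentiable ℝ f) (hL0 : 0 ≤ L)
    (hL : ∀ x y, ‖gradient f x - gradient f y‖ ≤ L * ‖x - y‖) (y : F) (A : E →L[ℝ] F) (u : E) :
    |f (y + A u) - f y - ⟪gradient f y, A u⟫| ≤ L * ‖A‖ ^ 2 * ‖u‖ ^ 2 :=
  calc |f (y + A u) - f y - ⟪gradient f y, A u⟫| ≤ L * ‖A u‖ ^ 2 := by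
        simpa using abs_sub_sub_inner_gradient_le hf hL0 hL (y + A u) y
    _ ≤ L * (‖A‖ * ‖u‖) ^ 2 := by gcongr; exact A.le_opNorm u
    _ = L * ‖A‖ ^ 2 * ‖u‖ ^ 2 := by ring

variable [MeasurableSpace E] [BorelSpace E] {μ : Measure E}

variable (hf : Differentiable ℝ f) (hL0 : 0 ≤ L)
  (hL : ∀ x y, ‖gradient f x - gradient f y‖ ≤ L * ‖x - y‖) (hμ : MemLp id 2 μ)
include hf hL0 hL hμ

lemma integrable_sub_sub_inner_gradient_comp_add [IsFiniteMeasure μ] (y : F) (A : E →L[ℝ] F) :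
    Integrable (fun u ↦ f (y + A u) - f y - ⟪gradient f y, A u⟫) μ := by
  refine ((hμ.integrable_norm_pow two_ne_zero).const_mul (L * ‖A‖ ^ 2)).mono'
    (by have := hf.continuous; fun_prop) (.of_forall fun u ↦ ?_)
  simpa using abs_sub_sub_inner_gradient_comp_add_le hf hL0 hL y A u

variable [CompleteSpace E] [IsProbabilityMeasure μ]

lemma integral_comp_add_eq (hμ0 : ∫ x, x ∂μ = 0) (y : F) (A : E →L[ℝ] F) :
    ∫ u, f (y + A u) ∂μ = f y + ∫ u, (f (y + A u) - f y - ⟪gradient f y, A u⟫) ∂μ := by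
  have hrem := integrable_sub_sub_inner_gradient_comp_add hf hL0 hL hμ y A
  let ℓ := (innerSL ℝ (gradient f y)).comp A
  have hid : Integrable id μ := hμ.integrable one_le_two
  have hℓ : ∫ u, ℓ u ∂μ = 0 := by simpa [hμ0] using ℓ.integral_comp_comm hid
  have hℓint : Integrable (fun u ↦ ℓ u) μ := ℓ.integrable_comp hid
  have haff : Integrable (fun u ↦ f y + ℓ u) μ := (integrable_const _).add hℓint
  calc ∫ u, f (y + A u) ∂μ
      = ∫ u, (f y + ℓ u + (f (y + A u) - f y - ⟪gradient f y, A u⟫)) ∂μ := by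
        congr with u; simp only [ℓ, ContinuousLinearMap.comp_apply, innerSL_apply_apply]; ring
    _ = f y + ∫ u, (f (y + A u) - f y - ⟪gradient f y, A u⟫) ∂μ := by
      rw [integral_add haff hrem, integral_add (integrable_const _) hℓint, hℓ]
      simp

lemma integral_comp_add_le (hμ0 : ∫ x, x ∂μ = 0) (y : F) (A : E →L[ℝ] F) :
    ∫ u, f (y + A u) ∂μ ≤ f y + L * ‖A‖ ^ 2 * ∫ u, ‖u‖ ^ 2 ∂μ := by
  rw [integral_comp_add_eq hf hL0 hL hμ hμ0, ← integral_const_mul]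
  refine (add_le_add_iff_left _).2 (integral_mono
    (integrable_sub_sub_inner_gradient_comp_add hf hL0 hL hμ y A)
    ((hμ.integrable_norm_pow two_ne_zero).const_mul _) fun u ↦ ?_)
  exact (le_abs_self _).trans (abs_sub_sub_inner_gradient_comp_add_le hf hL0 hL y A u)

lemma le_integral_comp_add (hμ0 : ∫ x, x ∂μ = 0) {y : F}
    (hconv : ∀ x, f y + ⟪gradient f y, x - y⟫ ≤ f x) (A : E →L[ℝ] F) :
    f y ≤ ∫ u, f (y + A u) ∂μ := by
  rw [integral_comp_add_eq hf hL0 hL hμ hμ0]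
  refine le_add_of_nonneg_right (integral_nonneg fun u ↦ ?_)
  have := hconv (y + A u)
  simp only [add_sub_cancel_left] at this
  show 0 ≤ _
  linarith

end LipschitzGradient

namespace Matrix

variable {n : Type*} [Fintype n] [DecidableEq n] {A : Matrix n n ℝ} {c : ℝ}

lemma IsHermitian.dotProduct_eigenvectorBasis_self (hA : A.IsHermitian) (i : n) :
    star ⇑(hA.eigenvectorBasis i) ⬝ᵥ ⇑(hA.eigenvectorBasis i) = 1 := by
  rw [dotProduct_comm, ← EuclideanSpace.inner_eq_star_dotProduct, real_inner_self_eq_norm_sq,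
    hA.eigenvectorBasis.orthonormal.1 i, one_pow]

lemma IsHermitian.eigenvalues_le (hA : A.IsHermitian) (h : (c • 1 - A).PosSemidef) (i : n) :
    hA.eigenvalues i ≤ c := by
  have := h.dotProduct_mulVec_nonneg (hA.eigenvectorBasis i)
  rw [sub_mulVec, dotProduct_sub, smul_mulVec, one_mulVec, dotProduct_smul,
    hA.dotProduct_eigenvectorBasis_self] at this
  rw [hA.eigenvalues_eq i]
  simpa using this

lemma eigenvalues_smul_one (h : (c • 1 : Matrix n n ℝ).IsHermitian) (i : n) :
    h.eigenvalues i = c := by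
  rw [h.eigenvalues_eq i, smul_mulVec, one_mulVec, dotProduct_smul,
    h.dotProduct_eigenvectorBasis_self]
  simp

lemma PosSemidef.det_le_pow (hA : A.PosSemidef) (h : (c • 1 - A).PosSemidef) :
    A.det ≤ c ^ Fintype.card n := by
  rw [hA.1.det_eq_prod_eigenvalues, ← Finset.card_univ, ← Finset.prod_const]
  exact Finset.prod_le_prod (fun i _ ↦ hA.eigenvalues_nonneg i) fun i _ ↦ hA.1.eigenvalues_le h i

lemma PosSemidef.sqrt_smul_one (h : (c • 1 : Matrix n n ℝ).PosSemidef) :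
    h.sqrt = √c • 1 := by
  have hdiag : diagonal ((√·) ∘ h.1.eigenvalues) = √c • (1 : Matrix n n ℝ) := by
    ext i j
    simp [diagonal_apply, one_apply, eigenvalues_smul_one]
  rw [PosSemidef.sqrt, hdiag, Matrix.mul_smul, Matrix.mul_one, Matrix.smul_mul,
    Unitary.mul_star_self_of_mem h.1.eigenvectorUnitary.2]

end Matrix

section Objective

variable {d : ℕ} {τ ζ : ℝ} {A : Mat d}

lemma smem_inv_smul_one (hτ : 0 < τ) (hτζ : τ ≤ ζ) : Smem τ ζ (τ⁻¹ • 1 : Mat d) := by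
  refine ⟨isSymm_one.smul _, ?_, ?_⟩
  · rw [loeLE, ← sub_smul]
    exact PosSemidef.one.smul (sub_nonneg.2 (inv_anti₀ hτ hτζ))
  · rw [loeLE, sub_self]
    exact PosSemidef.zero

lemma Smem.det_pos (hζ : 0 < ζ) (hA : Smem τ ζ A) : 0 < A.det := by
  have h := (PosDef.one.smul (inv_pos.2 hζ)).add_posSemidef hA.2.1
  rw [add_sub_cancel] at h
  exact h.det_pos

lemma Smem.det_le (hApsd : A.PosSemidef) (hA : Smem τ ζ A) : A.det ≤ τ⁻¹ ^ d := by
  simpa using hApsd.det_le_pow hA.2.2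

lemma Qa_eq (f : Vec d → ℝ) (α : ℝ) (μ : Vec d) (S : Mat d) (hS : S.PosSemidef) :
    Qa f α μ S hS = ∫ u, f (μ + (α • toEuclideanCLM (𝕜 := ℝ) hS.sqrt) u) ∂stdGaussian (Vec d)
      - α ^ 2 / 2 * Real.log S.det := by
  rw [Qa, gaussD_eq_stdGaussian]
  rfl

lemma norm_smul_smul_one_sq_le (α : ℝ) {c : ℝ} (hc : 0 ≤ c) :
    ‖α • √c • (1 : Vec d →L[ℝ] Vec d)‖ ^ 2 ≤ α ^ 2 * c := by
  have h1 : ‖(1 : Vec d →L[ℝ] Vec d)‖ ≤ 1 := ContinuousLinearMap.norm_id_le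
  calc ‖α • √c • (1 : Vec d →L[ℝ] Vec d)‖ ^ 2 ≤ (|α| * (√c * 1)) ^ 2 := by
        rw [norm_smul, norm_smul, Real.norm_eq_abs, Real.norm_of_nonneg (Real.sqrt_nonneg c)]
        gcongr
    _ = α ^ 2 * c := by rw [mul_one, mul_pow, sq_abs, Real.sq_sqrt hc]

theorem le_add_of_Qa_minimizer {α L : ℝ} (hτ : 0 < τ) (hτζ : τ ≤ ζ) (hL0 : 0 ≤ L)
    {f : Vec d → ℝ} (hf : Differentiable ℝ f)
    (hL : ∀ x y : Vec d, ‖gradient f x - gradient f y‖ ≤ L * ‖x - y‖)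
    {μhat : Vec d} (hconv : ∀ x, f μhat + ⟪gradient f μhat, x - μhat⟫ ≤ f x)
    {Shat : Mat d} (hShatMem : Smem τ ζ Shat) (hShatPsd : Shat.PosSemidef)
    (hmin : ∀ (μ : Vec d) (S : Mat d) (_ : Smem τ ζ S) (hSpsd : S.PosSemidef),
      Qa f α μhat Shat hShatPsd ≤ Qa f α μ S hSpsd) (μ : Vec d) :
    f μhat ≤ f μ + d * L * α ^ 2 / τ := by
  have hS₀ : (τ⁻¹ • 1 : Mat d).PosSemidef := PosSemidef.one.smul (inv_nonneg.2 hτ.le)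
  have hQ := hmin μ _ (smem_inv_smul_one hτ hτζ) hS₀
  rw [Qa_eq, Qa_eq, hS₀.sqrt_smul_one, map_smul, map_one] at hQ
  have h2 : MemLp id 2 (stdGaussian (Vec d)) := IsGaussian.memLp_two_id
  have hJhat := le_integral_comp_add hf hL0 hL h2 integral_id_stdGaussian hconv
    (α • toEuclideanCLM (𝕜 := ℝ) hShatPsd.sqrt)
  have hJ₀ := integral_comp_add_le hf hL0 hL h2 integral_id_stdGaussian μ (α • √τ⁻¹ • 1)
  rw [integral_norm_sq_stdGaussian, finrank_euclideanSpace_fin] at hJ₀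
  replace hJ₀ : _ ≤ f μ + L * (α ^ 2 * τ⁻¹) * d :=
    hJ₀.trans (by gcongr; exact norm_smul_smul_one_sq_le α (inv_nonneg.2 hτ.le))
  have hlog : Real.log Shat.det ≤ Real.log (τ⁻¹ • 1 : Mat d).det := by
    rw [det_smul, det_one, Fintype.card_fin, mul_one]
    exact Real.log_le_log (hShatMem.det_pos (hτ.trans_le hτζ)) (hShatMem.det_le hShatPsd)
  have hreg := mul_le_mul_of_nonneg_left hlog (by positivity : (0 : ℝ) ≤ α ^ 2 / 2)
  have hrhs : d * L * α ^ 2 / τ = L * (α ^ 2 * τ⁻¹) * d := by ring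
  linarith

end Objective

theorem stmt2_general {d : ℕ} (τ ζ α L σ γ : ℝ)
    (hτ : 0 < τ) (hτζ : τ ≤ ζ) (hα : 0 < α) (hL0 : 0 < L) (hσ0 : 0 < σ) (hγ0 : 0 ≤ γ)
    (f : Vec d → ℝ) (hf : ContDiff ℝ 2 f)
    (hL : ∀ x y : Vec d, ‖gradient f x - gradient f y‖ ≤ L * ‖x - y‖)
    (hσ : ∀ x y : Vec d, f x - f y ≥ ⟪gradient f y, x - y⟫ + σ / 2 * ‖x - y‖ ^ 2)
    (μstar : Vec d) (hμstar : ∀ z, f μstar ≤ f z)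
    (μhat : Vec d) (Shat : Mat d) (hShatMem : Smem τ ζ Shat) (hShatPsd : Shat.PosSemidef)
    (hmin : ∀ (μ : Vec d) (S : Mat d) (hSmem : Smem τ ζ S) (hSpsd : S.PosSemidef),
      Qa f α μhat Shat hShatPsd ≤ Qa f α μ S hSpsd) :
    f μhat - f μstar
        ≤ (d : ℝ) * L * α ^ 2 / τ + γ * α ^ 3 * ((d : ℝ) + 3) ^ (3 / 2 : ℝ) / (3 * τ ^ (3 / 2 : ℝ))
          + (d : ℝ) * α ^ 2 / 2 * (τ⁻¹ - ζ⁻¹) ∧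
    ‖μstar - μhat‖ ^ 2
        ≤ 2 * (d : ℝ) * L * α ^ 2 / (σ * τ)
          + 2 * γ * α ^ 3 * ((d : ℝ) + 3) ^ (3 / 2 : ℝ) / (3 * σ * τ ^ (3 / 2 : ℝ))
          + (d : ℝ) * α ^ 2 / σ * (τ⁻¹ - ζ⁻¹) := by
  have hconv (x : Vec d) : f μhat + ⟪gradient f μhat, x - μhat⟫ ≤ f x := by
    nlinarith [hσ x μhat, sq_nonneg ‖x - μhat‖]
  have hgap := le_add_of_Qa_minimizer hτ hτζ hL0.le (hf.differentiable two_ne_zero) hL hconv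
    hShatMem hShatPsd hmin μstar
  have hγterm : 0 ≤ γ * α ^ 3 * ((d : ℝ) + 3) ^ (3 / 2 : ℝ) / (3 * τ ^ (3 / 2 : ℝ)) := by
    positivity
  have hSterm : 0 ≤ (d : ℝ) * α ^ 2 / 2 * (τ⁻¹ - ζ⁻¹) :=
    mul_nonneg (by positivity) (sub_nonneg.2 (inv_anti₀ hτ hτζ))
  have hvalue : f μhat - f μstar ≤ (d : ℝ) * L * α ^ 2 / τ
      + γ * α ^ 3 * ((d : ℝ) + 3) ^ (3 / 2 : ℝ) / (3 * τ ^ (3 / 2 : ℝ))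
      + (d : ℝ) * α ^ 2 / 2 * (τ⁻¹ - ζ⁻¹) := by linarith
  refine ⟨hvalue, ?_⟩
  have hdist : σ / 2 * ‖μstar - μhat‖ ^ 2 ≤ f μhat - f μstar := by
    simpa [gradient_eq_zero_of_forall_le hμstar, norm_sub_rev] using hσ μhat μstar
  calc ‖μstar - μhat‖ ^ 2 ≤ 2 / σ * (f μhat - f μstar) := by
        rw [div_mul_eq_mul_div, le_div_iff₀ hσ0]; linarith
    _ ≤ 2 / σ * ((d : ℝ) * L * α ^ 2 / τ
      + γ * α ^ 3 * ((d : ℝ) + 3) ^ (3 / 2 : ℝ) / (3 * τ ^ (3 / 2 : ℝ))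
      + (d : ℝ) * α ^ 2 / 2 * (τ⁻¹ - ζ⁻¹)) := by gcongr
    _ = _ := by field_simp

/-- the `μ`-part `μ̂*` of a minimizer of `Q_α` over `ℝ^d × S` is close
to the minimizer `μ*` of `f`, both in function value and in distance. -/
theorem stmt2 {d : ℕ} (hd : 1 ≤ d) (τ ζ α L σ γ : ℝ)
    (hτ : 0 < τ) (hτζ : τ ≤ ζ) (hα : 0 < α) (hL0 : 0 < L) (hσ0 : 0 < σ) (hγ0 : 0 ≤ γ)
    (f : Vec d → ℝ) (hf : ContDiff ℝ 2 f)
    (hL : ∀ x y : Vec d, ‖gradient f x - gradient f y‖ ≤ L * ‖x - y‖)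
    (hσ : ∀ x y : Vec d, f x - f y ≥ ⟪gradient f y, x - y⟫ + σ / 2 * ‖x - y‖ ^ 2)
    (hγ : ∀ x y : Vec d, matOpNorm (hess f x - hess f y) ≤ γ * ‖x - y‖)
    (μstar : Vec d) (hμstar : ∀ z, f μstar ≤ f z)
    (μhat : Vec d) (Shat : Mat d) (hShatMem : Smem τ ζ Shat) (hShatPsd : Shat.PosSemidef)
    (hmin : ∀ (μ : Vec d) (S : Mat d) (hSmem : Smem τ ζ S) (hSpsd : S.PosSemidef),
      Qa f α μhat Shat hShatPsd ≤ Qa f α μ S hSpsd) :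
    f μhat - f μstar
        ≤ (d : ℝ) * L * α ^ 2 / τ + γ * α ^ 3 * ((d : ℝ) + 3) ^ (3 / 2 : ℝ) / (3 * τ ^ (3 / 2 : ℝ))
          + (d : ℝ) * α ^ 2 / 2 * (τ⁻¹ - ζ⁻¹) ∧
    ‖μstar - μhat‖ ^ 2
        ≤ 2 * (d : ℝ) * L * α ^ 2 / (σ * τ)
          + 2 * γ * α ^ 3 * ((d : ℝ) + 3) ^ (3 / 2 : ℝ) / (3 * σ * τ ^ (3 / 2 : ℝ))
          + (d : ℝ) * α ^ 2 / σ * (τ⁻¹ - ζ⁻¹) :=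
  stmt2_general τ ζ α L σ γ hτ hτζ hα hL0 hσ0 hγ0 f hf hL hσ μstar hμstar μhat Shat hShatMem
    hShatPsd hmin
end
end

section
/- Let u be a standard normal real random variable, and let H > 0 and s > 0 be real numbers. Then E[((H/2)·(u⁴ − u²) − s^{-1})²] = (39/2)·H² − 2s^{-1}H + s^{-2} ≥ (37/2)·H² > 0. (This quantity is the second moment E[‖G̃(Σ)‖²] of the stochastic covariance update of MiNES in the case d = b = 1, for the quadratic objective f(z) = (H/2)z² with μ = 0 and Σ = s; in particular the variance of the stochastic mirror-descent direction is bounded away from zero, so the O(1/k) rate for the covariance matrix cannot be improved to a linear rate.) -/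
open MeasureTheory ProbabilityTheory

noncomputable section

open Real Set
open scoped NNReal ENNReal

lemma transfer (g : ℝ → ℝ) :
    ∫ x, g x ∂(gaussianReal 0 1) = ∫ x, gaussianPDFReal 0 1 x * g x := by
  rw [gaussianReal_of_var_ne_zero 0 one_ne_zero]
  have : (gaussianPDF 0 1) = fun x => ((Real.toNNReal (gaussianPDFReal 0 1 x) : ℝ≥0) : ℝ≥0∞) := rfl
  rw [this, integral_withDensity_eq_integral_smul (measurable_gaussianPDFReal 0 1).real_toNNReal g]
  congr 1; funext x
  simp [NNReal.smul_def, Real.coe_toNNReal _ (gaussianPDFReal_nonneg 0 1 x)]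

lemma pdf_eq (x : ℝ) :
    gaussianPDFReal 0 1 x = (Real.sqrt (2 * π))⁻¹ * Real.exp (-(1/2) * x ^ 2) := by
  simp only [gaussianPDFReal, NNReal.coe_one, mul_one, sub_zero]
  ring_nf

lemma integrable_pow_gauss (n : ℕ) :
    Integrable (fun x : ℝ => x ^ n * Real.exp (-(1/2) * x ^ 2)) := by
  have := integrable_rpow_mul_exp_neg_mul_sq (by norm_num : (0:ℝ) < 1/2) (s := (n:ℝ))
    (by exact lt_of_lt_of_le neg_one_lt_zero (Nat.cast_nonneg n))
  simpa [Real.rpow_natCast] using this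

lemma integrable_pdf_pow (n : ℕ) :
    Integrable (fun x : ℝ => gaussianPDFReal 0 1 x * x ^ n) := by
  have : (fun x : ℝ => gaussianPDFReal 0 1 x * x ^ n)
      = fun x => (Real.sqrt (2 * π))⁻¹ * (x ^ n * Real.exp (-(1/2) * x ^ 2)) := by
    funext x; rw [pdf_eq]; ring
  rw [this]
  exact (integrable_pow_gauss n).const_mul _

lemma In (n : ℕ) :
    ∫ x, gaussianPDFReal 0 1 x * x ^ (2 * n)
      = 2 ^ n * Real.Gamma (n + 1/2) / Real.sqrt π := by
  have h1 : (fun x : ℝ => gaussianPDFReal 0 1 x * x ^ (2*n))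
      = fun x => (Real.sqrt (2 * π))⁻¹ * (x ^ (2*n) * Real.exp (-(1/2) * x ^ 2)) := by
    funext x; rw [pdf_eq]; ring
  rw [h1, integral_const_mul]
  have h2 : (fun x : ℝ => x ^ (2*n) * Real.exp (-(1/2) * x ^ 2))
      = fun x => (fun t : ℝ => t ^ (2*n) * Real.exp (-(1/2) * t ^ 2)) |x| := by
    funext x
    simp only [pow_mul, sq_abs]
  rw [h2, integral_comp_abs (f := fun t : ℝ => t ^ (2*n) * Real.exp (-(1/2) * t ^ 2))]
  have h3 : ∫ x in Ioi (0:ℝ), x ^ (2*n) * Real.exp (-(1/2) * x ^ 2)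
      = ∫ x in Ioi (0:ℝ), x ^ ((2*n : ℕ) : ℝ) * Real.exp (-(1/2) * x ^ (2:ℝ)) := by
    refine setIntegral_congr_fun measurableSet_Ioi (fun x hx => ?_)
    rw [Real.rpow_natCast, show ((2:ℝ) : ℝ) = ((2:ℕ) : ℝ) by norm_num, Real.rpow_natCast]
  rw [h3, integral_rpow_mul_exp_neg_mul_rpow (by norm_num) (by exact lt_of_lt_of_le neg_one_lt_zero (Nat.cast_nonneg _)) (by norm_num)]
  -- now arithmetic
  have hq : (-(((2*n : ℕ):ℝ) + 1) / 2) = -((n:ℝ) + 1/2) := by push_cast; ring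
  have hg : (((2*n : ℕ):ℝ) + 1) / 2 = (n:ℝ) + 1/2 := by push_cast; ring
  rw [hq, hg]
  have h4 : ((1:ℝ)/2) ^ (-((n:ℝ) + 1/2)) = 2 ^ (n:ℝ) * Real.sqrt 2 := by
    rw [one_div, Real.inv_rpow (by norm_num), ← Real.rpow_neg (by norm_num), neg_neg,
      Real.rpow_add (by norm_num), Real.rpow_natCast, ← Real.rpow_natCast 2 n]
    congr 1
    rw [Real.sqrt_eq_rpow]
    norm_num
  rw [h4]
  have h5 : Real.sqrt (2 * π) = Real.sqrt 2 * Real.sqrt π := Real.sqrt_mul (by norm_num) _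
  rw [h5, Real.rpow_natCast]
  have hs2 : Real.sqrt 2 ≠ 0 := by positivity
  have hsp : Real.sqrt π ≠ 0 := by positivity
  field_simp

/-- for `u ~ N(0,1)` and `H, s > 0`, the second moment of the MiNES
stochastic covariance gradient `G̃(Σ) = (H/2)(u⁴ − u²) − s⁻¹` (case `d = b = 1`, quadratic
objective `f(z) = (H/2)z²`, `μ = 0`, `Σ = s`) equals `(39/2)H² − 2s⁻¹H + s⁻²`, which is
at least `(37/2)H² > 0`. -/
theorem stmt19 (H s : ℝ) (hH : 0 < H) (hs : 0 < s) :
    (∫ u, ((H / 2) * (u ^ 4 - u ^ 2) - s⁻¹) ^ 2 ∂(gaussianReal 0 1))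
        = 39 / 2 * H ^ 2 - 2 * s⁻¹ * H + s⁻¹ ^ 2 ∧
    37 / 2 * H ^ 2 ≤ 39 / 2 * H ^ 2 - 2 * s⁻¹ * H + s⁻¹ ^ 2 ∧
    0 < 37 / 2 * H ^ 2 := by
  have hg1 : Real.Gamma (1/2) = Real.sqrt π := Real.Gamma_one_half_eq
  have hg2 : Real.Gamma ((3:ℝ)/2) = 1/2 * Real.sqrt π := by
    rw [show (3:ℝ)/2 = 1/2 + 1 by ring, Real.Gamma_add_one (by norm_num), hg1]
  have hg3 : Real.Gamma ((5:ℝ)/2) = 3/4 * Real.sqrt π := by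
    rw [show (5:ℝ)/2 = 3/2 + 1 by ring, Real.Gamma_add_one (by norm_num), hg2]; ring
  have hg4 : Real.Gamma ((7:ℝ)/2) = 15/8 * Real.sqrt π := by
    rw [show (7:ℝ)/2 = 5/2 + 1 by ring, Real.Gamma_add_one (by norm_num), hg3]; ring
  have hg5 : Real.Gamma ((9:ℝ)/2) = 105/16 * Real.sqrt π := by
    rw [show (9:ℝ)/2 = 7/2 + 1 by ring, Real.Gamma_add_one (by norm_num), hg4]; ring
  have hsp : Real.sqrt π ≠ 0 := by positivity
  have I0 : ∫ x, gaussianPDFReal 0 1 x * x ^ 0 = 1 := by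
    have := In 0; simp only [Nat.mul_zero, Nat.cast_zero, zero_add] at this
    rw [this, hg1]; field_simp
  have I1 : ∫ x, gaussianPDFReal 0 1 x * x ^ 2 = 1 := by
    have := In 1; norm_num at this
    rw [this, hg2]; field_simp
  have I2 : ∫ x, gaussianPDFReal 0 1 x * x ^ 4 = 3 := by
    have := In 2; norm_num at this
    rw [this, hg3]; field_simp
  have I3 : ∫ x, gaussianPDFReal 0 1 x * x ^ 6 = 15 := by
    have := In 3; norm_num at this
    rw [this, hg4]; field_simp
  have I4 : ∫ x, gaussianPDFReal 0 1 x * x ^ 8 = 105 := by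
    have := In 4; norm_num at this
    rw [this, hg5]; field_simp
  have hmain : (∫ u, ((H / 2) * (u ^ 4 - u ^ 2) - s⁻¹) ^ 2 ∂(gaussianReal 0 1))
      = 39 / 2 * H ^ 2 - 2 * s⁻¹ * H + s⁻¹ ^ 2 := by
    rw [transfer]
    have expand : (fun x : ℝ => gaussianPDFReal 0 1 x * ((H / 2) * (x ^ 4 - x ^ 2) - s⁻¹) ^ 2)
        = fun x => (H^2/4) * (gaussianPDFReal 0 1 x * x ^ 8)
            + (-(H^2/2)) * (gaussianPDFReal 0 1 x * x ^ 6)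
            + (H^2/4 - H * s⁻¹) * (gaussianPDFReal 0 1 x * x ^ 4)
            + (H * s⁻¹) * (gaussianPDFReal 0 1 x * x ^ 2)
            + (s⁻¹^2) * (gaussianPDFReal 0 1 x * x ^ 0) := by
      funext x; ring
    rw [expand]
    rw [integral_add, integral_add, integral_add, integral_add]
    · rw [integral_const_mul, integral_const_mul, integral_const_mul, integral_const_mul,
        integral_const_mul, I0, I1, I2, I3, I4]
      ring
    · exact ((integrable_pdf_pow 8).const_mul _)
    · exact ((integrable_pdf_pow 6).const_mul _)
    · exact (((integrable_pdf_pow 8).const_mul _).add ((integrable_pdf_pow 6).const_mul _))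
    · exact ((integrable_pdf_pow 4).const_mul _)
    · exact ((((integrable_pdf_pow 8).const_mul _).add ((integrable_pdf_pow 6).const_mul _)).add
        ((integrable_pdf_pow 4).const_mul _))
    · exact ((integrable_pdf_pow 2).const_mul _)
    · exact (((((integrable_pdf_pow 8).const_mul _).add ((integrable_pdf_pow 6).const_mul _)).add
        ((integrable_pdf_pow 4).const_mul _)).add ((integrable_pdf_pow 2).const_mul _))
    · exact ((integrable_pdf_pow 0).const_mul _)
  refine ⟨hmain, ?_, by positivity⟩
  nlinarith [sq_nonneg (H - s⁻¹)]
end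
end
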